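/- arXiv:1707.06867 — 4 statements merged into one kernel-verified Lean document; each statement's English description precedes it below -/
import Mathlib

section
/- For every real number p ≥ 9, the optimal Khintchine constant B_p = 2^{(p−2)/2} · Γ((p+1)/2) / Γ(3/2) satisfies B_p ≤ (p/2.5)^{p/2}, where Γ denotes the Gamma function. -/
/-!
Since `Γ(s + 1) = s Γ(s)`, the constant satisfies `B_{p+2} = (p + 1) B_p`, while for `p ≥ 5` the
bound `(p/2.5)^(p/2)` grows by at least the factor `p + 1` from `p` to `p + 2`; this reduces the
claim to `9 ≤ p ≤ 11`. There log-convexity of `Γ` between `5` and `6` and the tangent bound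
`log p ≥ log 9 + 1 - 9/p` turn the claim into an inequality linear in `p`, which holds at both
endpoints by the known numerical bounds on `log 2`, `log 3`, `log 5` and `π`.
-/

open Real

/-- For `p ≥ 9` this is the optimal Khintchine constant `B_p`; for smaller `p` the optimal
constant is `max 1 (khintchineConst p)`. -/
noncomputable def khintchineConst (p : ℝ) : ℝ :=
  (2 : ℝ) ^ ((p - 2) / 2) * Gamma ((p + 1) / 2) / Gamma (3 / 2)

lemma Real.Gamma_three_div_two : Gamma (3 / 2) = √π / 2 := by
  rw [show (3 / 2 : ℝ) = 1 / 2 + 1 by norm_num, Gamma_add_one (by norm_num), Gamma_one_half_eq]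
  ring

lemma Real.log_add_one_sub_div_le_log {a x : ℝ} (ha : 0 < a) (hx : 0 < x) :
    log a + 1 - a / x ≤ log x := by
  have h := one_sub_inv_le_log_of_pos (div_pos hx ha)
  rw [log_div hx.ne' ha.ne', inv_div] at h
  linarith

lemma Real.log_Gamma_add_le {x t : ℝ} (hx : 0 < x) (ht₀ : 0 ≤ t) (ht₁ : t ≤ 1) :
    log (Gamma (x + t)) ≤ log (Gamma x) + t * log x := by
  have h := convexOn_log_Gamma.2 (Set.mem_Ioi.2 hx) (Set.mem_Ioi.2 (by linarith : 0 < x + 1))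
    (sub_nonneg.2 ht₁) ht₀ (by ring)
  simp only [Function.comp_apply, smul_eq_mul, Gamma_add_one hx.ne',
    log_mul hx.ne' (Gamma_pos_of_pos hx).ne'] at h
  rw [show (1 - t) * x + t * (x + 1) = x + t by ring] at h
  linarith

lemma khintchineConst_pos {p : ℝ} (hp : -1 < p) : 0 < khintchineConst p := by
  have : 0 < Gamma ((p + 1) / 2) := Gamma_pos_of_pos (by linarith)
  have : 0 < Gamma (3 / 2) := Gamma_pos_of_pos (by norm_num)
  unfold khintchineConst
  positivity

lemma khintchineConst_add_two {p : ℝ} (hp : p + 1 ≠ 0) :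
    khintchineConst (p + 2) = (p + 1) * khintchineConst p := by
  unfold khintchineConst
  rw [show (p + 2 + 1) / 2 = (p + 1) / 2 + 1 by ring, Gamma_add_one (by simpa using hp),
    show (p + 2 - 2) / 2 = (p - 2) / 2 + 1 by ring, rpow_add_one two_ne_zero]
  ring

lemma log_khintchineConst {p : ℝ} (hp : -1 < p) :
    log (khintchineConst p) =
      (p - 2) / 2 * log 2 + log (Gamma ((p + 1) / 2)) - (log π / 2 - log 2) := by
  have hΓ : 0 < Gamma ((p + 1) / 2) := Gamma_pos_of_pos (by linarith)
  rw [khintchineConst, Gamma_three_div_two, log_div (by positivity) (by positivity),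
    log_mul (by positivity) hΓ.ne', log_rpow two_pos, log_div (by positivity) two_ne_zero,
    log_sqrt pi_pos.le]

lemma add_one_mul_rpow_le_rpow_add_two {q : ℝ} (hq : 5 ≤ q) :
    (q + 1) * (q / 2.5) ^ (q / 2) ≤ ((q + 2) / 2.5) ^ ((q + 2) / 2) := by
  have hq₀ : 0 < q := by linarith
  rw [← log_le_log_iff (by positivity) (by positivity), log_mul (by positivity) (by positivity),
    log_rpow (by positivity), log_rpow (by positivity), log_div hq₀.ne' (by norm_num),
    log_div (by positivity) (by norm_num)]
  have h₁ := log_add_one_sub_div_le_log hq₀ (by linarith : 0 < q + 1)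
  have h₂ := log_add_one_sub_div_le_log (by linarith : 0 < q + 1) (by linarith : 0 < q + 2)
  have hlog : log 2.5 < 0.9163 := by
    rw [show (2.5 : ℝ) = 5 / 2 by norm_num, log_div (by norm_num) (by norm_num)]
    linarith [log_five_lt_d9, log_two_gt_d9]
  -- `(2q + 1) / (2q + 2) ≥ 0.9163` is exactly where `q ≥ 5` is needed
  have hrat : 0.9163 ≤ q / 2 * ((1 - q / (q + 1)) + (1 - (q + 1) / (q + 2))) +
      (1 - (q + 1) / (q + 2)) := by
    rw [show q / 2 * ((1 - q / (q + 1)) + (1 - (q + 1) / (q + 2))) + (1 - (q + 1) / (q + 2)) =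
      (2 * q + 1) / (2 * (q + 1)) by field_simp; ring, le_div_iff₀ (by positivity)]
    linarith
  nlinarith

lemma khintchineConst_le_of_mem_Icc {p : ℝ} (hp : p ∈ Set.Icc 9 11) :
    khintchineConst p ≤ (p / 2.5) ^ (p / 2) := by
  obtain ⟨h₉, h₁₁⟩ := hp
  have hp₀ : 0 < p := by linarith
  rw [← log_le_log_iff (khintchineConst_pos (by linarith)) (by positivity),
    log_khintchineConst (by linarith), log_rpow (by positivity), log_div hp₀.ne' (by norm_num)]
  have hΓ : log (Gamma ((p + 1) / 2)) ≤ log 24 + (p - 9) / 2 * log 5 := by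
    have hΓ₅ : Gamma 5 = 24 := by
      rw [show (5 : ℝ) = (4 : ℕ) + 1 by norm_num, Gamma_nat_eq_factorial]
      norm_num [Nat.factorial]
    have h := log_Gamma_add_le (x := 5) (t := (p - 9) / 2) (by norm_num) (by linarith)
      (by linarith)
    rwa [show (5 : ℝ) + (p - 9) / 2 = (p + 1) / 2 by ring, hΓ₅] at h
  have hlog_p : p * (log 9 + 1) - 9 ≤ p * log p := by
    have h := mul_le_mul_of_nonneg_left (log_add_one_sub_div_le_log (a := 9) (by norm_num) hp₀)
      hp₀.le
    rwa [mul_sub, mul_div_cancel₀ _ hp₀.ne'] at h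
  have hlog_π : log 3 + 1 - 3 / 3.14 ≤ log π :=
    (sub_le_sub_left (div_le_div_of_nonneg_left (by norm_num) (by norm_num) pi_gt_d2.le) _).trans
      (log_add_one_sub_div_le_log (by norm_num) pi_pos)
  have h₉ : log 9 = 2 * log 3 := by
    rw [show (9 : ℝ) = 3 ^ 2 by norm_num, log_pow]; norm_num
  have h₂₄ : log 24 = 3 * log 2 + log 3 := by
    rw [show (24 : ℝ) = 2 ^ 3 * 3 by norm_num, log_mul (by norm_num) (by norm_num), log_pow]
    norm_num
  have h₂₅ : log 2.5 = log 5 - log 2 := by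
    rw [show (2.5 : ℝ) = 5 / 2 by norm_num, log_div (by norm_num) (by norm_num)]
  rw [h₂₅]
  rw [h₂₄] at hΓ
  rw [h₉] at hlog_p
  -- what remains is linear in `p`, with margins of about `0.04` at `p = 9` and `0.017` at `p = 11`
  nlinarith [log_two_gt_d9, log_two_lt_d9, log_three_gt_d9, log_three_lt_d9, log_five_gt_d9,
    log_five_lt_d9]

lemma khintchineConst_add_two_mul_le {r : ℝ} (hr : 5 ≤ r)
    (hbase : khintchineConst r ≤ (r / 2.5) ^ (r / 2)) (n : ℕ) :
    khintchineConst (r + 2 * n) ≤ ((r + 2 * n) / 2.5) ^ ((r + 2 * n) / 2) := by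
  induction n with
  | zero => simpa using hbase
  | succ n ih =>
    have hq : 5 ≤ r + 2 * n := by have := n.cast_nonneg (α := ℝ); linarith
    rw [Nat.cast_succ, show r + 2 * (n + 1 : ℝ) = r + 2 * n + 2 by ring,
      khintchineConst_add_two (by linarith)]
    calc (r + 2 * n + 1) * khintchineConst (r + 2 * n)
        ≤ (r + 2 * n + 1) * ((r + 2 * n) / 2.5) ^ ((r + 2 * n) / 2) := by gcongr
      _ ≤ ((r + 2 * n + 2) / 2.5) ^ ((r + 2 * n + 2) / 2) := add_one_mul_rpow_le_rpow_add_two hq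

/-- For every real `p ≥ 9`, the optimal Khintchine constant
`B_p = 2^((p-2)/2) * Γ((p+1)/2) / Γ(3/2)` satisfies `B_p ≤ (p/2.5)^(p/2)`. -/
theorem khintchine_constant_bound (p : ℝ) (hp : 9 ≤ p) :
    (2 : ℝ) ^ ((p - 2) / 2) * Real.Gamma ((p + 1) / 2) / Real.Gamma (3 / 2) ≤
      (p / 2.5) ^ (p / 2) := by
  set n := ⌊(p - 9) / 2⌋₊
  have hn_le : (n : ℝ) ≤ (p - 9) / 2 := Nat.floor_le (by linarith)
  have hn_gt : (p - 9) / 2 < n + 1 := Nat.lt_floor_add_one _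
  have h := khintchineConst_add_two_mul_le (by linarith)
    (khintchineConst_le_of_mem_Icc (p := p - 2 * n) ⟨by linarith, by linarith⟩) n
  rw [sub_add_cancel] at h
  exact h
end

section
/- Let k be a positive integer, let x₁, …, x_k and y₁, …, y_k be nonnegative reals with y_i ≥ x_i for every i, let X₁, …, X_k be independent centered Gaussians with variances x₁, …, x_k, and let Y₁, …, Y_k be independent centered Gaussians with variances y₁, …, y_k. Then for every t > 0, Pr[ Σ_{i=1}^k Y_i² ≤ t ] ≤ Pr[ Σ_{i=1}^k X_i² ≤ t ]. -/
open MeasureTheory ProbabilityTheory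
open scoped NNReal

/-! By independence, both probabilities are the mass of the ball `{v | ∑ vᵢ² ≤ t}` under a
product of centered Gaussians. Scaling the `i`-th coordinate by `√(xᵢ / yᵢ) ≤ 1` pushes the
product with variances `yᵢ` forward to the one with variances `xᵢ`, and this contraction maps the
ball into itself, so the ball has at least as much mass under the smaller variances. -/

lemma gaussianReal_map_const_mul_sqrt_div {v w : ℝ≥0} (hvw : v ≤ w) :
    (gaussianReal 0 w).map ((NNReal.sqrt (v / w) : ℝ) * ·) = gaussianReal 0 v := by
  rw [gaussianReal_map_const_mul, mul_zero]
  congr 1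
  rcases eq_or_ne w 0 with rfl | hw
  · simp [le_antisymm hvw zero_le]
  · ext
    simp only [NNReal.coe_mul, NNReal.coe_mk]
    rw [← NNReal.coe_pow, NNReal.sq_sqrt, ← NNReal.coe_mul, div_mul_cancel₀ _ hw]

lemma sum_sq_mul_le_sum_sq {ι : Type*} (s : Finset ι) {c : ι → ℝ} (hc : ∀ i, |c i| ≤ 1)
    (v : ι → ℝ) : ∑ i ∈ s, (c i * v i) ^ 2 ≤ ∑ i ∈ s, v i ^ 2 :=
  Finset.sum_le_sum fun i _ => by
    rw [mul_pow, ← sq_abs (c i)]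
    exact mul_le_of_le_one_left (sq_nonneg _) (pow_le_one₀ (abs_nonneg _) (hc i))

lemma measurableSet_sum_sq_le {ι : Type*} [Fintype ι] (t : ℝ) :
    MeasurableSet {v : ι → ℝ | ∑ i, v i ^ 2 ≤ t} :=
  measurableSet_le (by fun_prop) measurable_const

lemma pi_gaussianReal_sum_sq_le_antitone {ι : Type*} [Fintype ι] {x y : ι → ℝ≥0}
    (hxy : ∀ i, x i ≤ y i) (t : ℝ) :
    Measure.pi (fun i => gaussianReal 0 (y i)) {v | ∑ i, v i ^ 2 ≤ t}
      ≤ Measure.pi (fun i => gaussianReal 0 (x i)) {v | ∑ i, v i ^ 2 ≤ t} := by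
  set c : ι → ℝ := fun i => NNReal.sqrt (x i / y i)
  have hc : ∀ i, |c i| ≤ 1 := fun i => by
    rw [abs_of_nonneg (NNReal.coe_nonneg _), NNReal.coe_le_one, NNReal.sqrt_le_one]
    exact div_le_one_of_le₀ (hxy i) zero_le
  have hpi : Measure.pi (fun i => gaussianReal 0 (x i))
      = (Measure.pi fun i => gaussianReal 0 (y i)).map (fun v i => c i * v i) := by
    rw [Measure.pi_map_pi fun i => (measurable_const_mul (c i)).aemeasurable]
    simp only [c, gaussianReal_map_const_mul_sqrt_div (hxy _)]
  rw [hpi, Measure.map_apply (by fun_prop) (measurableSet_sum_sq_le t)]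
  exact measure_mono fun v hv => (sum_sq_mul_le_sum_sq _ hc v).trans hv

namespace ProbabilityTheory

lemma iIndepFun.measure_preimage_eq_pi {Ω ι : Type*} {β : ι → Type*} [MeasurableSpace Ω]
    [∀ i, MeasurableSpace (β i)] [Fintype ι] {μ : Measure Ω} {X : (i : ι) → Ω → β i}
    (hX : ∀ i, Measurable (X i)) (hindep : iIndepFun X μ) {A : Set ((i : ι) → β i)} (hA : MeasurableSet A) :
    μ ((fun ω i => X i ω) ⁻¹' A) = Measure.pi (fun i => μ.map (X i)) A := by
  rw [← hindep.map_fun_eq_pi_map fun i => (hX i).aemeasurable, Measure.map_apply (by fun_prop) hA]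

end ProbabilityTheory

theorem gaussian_sum_square_tail_monotone_general {Ω₁ Ω₂ : Type*} [MeasurableSpace Ω₁]
    [MeasurableSpace Ω₂] (μ₁ : Measure Ω₁) (μ₂ : Measure Ω₂)
    (k : ℕ) (x y : Fin k → ℝ≥0) (hxy : ∀ i, x i ≤ y i)
    (X : Fin k → Ω₁ → ℝ) (Y : Fin k → Ω₂ → ℝ)
    (hXmeas : ∀ i, Measurable (X i)) (hYmeas : ∀ i, Measurable (Y i))
    (hXlaw : ∀ i, μ₁.map (X i) = gaussianReal 0 (x i))
    (hYlaw : ∀ i, μ₂.map (Y i) = gaussianReal 0 (y i))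
    (hXindep : iIndepFun X μ₁)
    (hYindep : iIndepFun Y μ₂)
    (t : ℝ) :
    μ₂ {ω | ∑ i, Y i ω ^ 2 ≤ t} ≤ μ₁ {ω | ∑ i, X i ω ^ 2 ≤ t} := by
  have hX := hXindep.measure_preimage_eq_pi hXmeas (measurableSet_sum_sq_le t)
  have hY := hYindep.measure_preimage_eq_pi hYmeas (measurableSet_sum_sq_le t)
  simp only [hXlaw, hYlaw] at hX hY
  exact hY.trans_le (pi_gaussianReal_sum_sq_le_antitone hxy t) |>.trans_eq hX.symm

/-- Let `X₁,…,X_k` be independent centered Gaussians with variances `x₁,…,x_k`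
and `Y₁,…,Y_k` independent centered Gaussians with variances `y₁,…,y_k`, where `yᵢ ≥ xᵢ` for
every `i`.  Then for every `t > 0`, `Pr[∑ Yᵢ² ≤ t] ≤ Pr[∑ Xᵢ² ≤ t]`. -/
theorem gaussian_sum_square_tail_monotone {Ω₁ Ω₂ : Type*} [MeasurableSpace Ω₁]
    [MeasurableSpace Ω₂] (μ₁ : Measure Ω₁) (μ₂ : Measure Ω₂)
    [IsProbabilityMeasure μ₁] [IsProbabilityMeasure μ₂]
    (k : ℕ) (hk : 0 < k) (x y : Fin k → ℝ≥0) (hxy : ∀ i, x i ≤ y i)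
    (X : Fin k → Ω₁ → ℝ) (Y : Fin k → Ω₂ → ℝ)
    (hXmeas : ∀ i, Measurable (X i)) (hYmeas : ∀ i, Measurable (Y i))
    (hXlaw : ∀ i, μ₁.map (X i) = gaussianReal 0 (x i))
    (hYlaw : ∀ i, μ₂.map (Y i) = gaussianReal 0 (y i))
    (hXindep : iIndepFun X μ₁)
    (hYindep : iIndepFun Y μ₂)
    (t : ℝ) (ht : 0 < t) :
    μ₂ {ω | ∑ i, Y i ω ^ 2 ≤ t} ≤ μ₁ {ω | ∑ i, X i ω ^ 2 ≤ t} :=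
  gaussian_sum_square_tail_monotone_general μ₁ μ₂ k x y hxy X Y hXmeas hYmeas hXlaw hYlaw hXindep
    hYindep t
end

section
/- Let k be a positive integer, ε ∈ (0,1), and let y₁, …, y_k be independent centered Gaussian random variables with variances σ₁², …, σ_k² satisfying σ_i² ≥ 1/2 for all i. Then Pr[ Σ_{i=1}^k y_i² ≤ ε² ] ≤ (3ε)^k. -/
/-!
The event `∑ yᵢ² ≤ ε²` is contained in the event that every `|yᵢ| ≤ ε`, whose probability is,
by independence, the product of the probabilities `Pr[|yᵢ| ≤ ε]`.
A Gaussian density with variance `v` is bounded by `1 / √(2πv)`, which is at most `1` once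
`v ≥ 1/2`, so each factor is at most the length `2ε ≤ 3ε` of the interval `[-ε, ε]`.
-/

open MeasureTheory ProbabilityTheory Real
open scoped NNReal

lemma gaussianPDFReal_le_inv_sqrt (m : ℝ) (v : ℝ≥0) (x : ℝ) :
    gaussianPDFReal m v x ≤ (√(2 * π * v))⁻¹ := by
  rw [gaussianPDFReal]
  refine mul_le_of_le_one_right (by positivity) (exp_le_one_iff.2 ?_)
  exact div_nonpos_of_nonpos_of_nonneg (neg_nonpos.2 (sq_nonneg _)) (by positivity)

lemma gaussianReal_le_mul_volume (m : ℝ) {v : ℝ≥0} (hv : v ≠ 0) (s : Set ℝ) :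
    gaussianReal m v s ≤ ENNReal.ofReal (√(2 * π * v))⁻¹ * volume s := by
  rw [gaussianReal_apply m hv, ← setLIntegral_const]
  exact lintegral_mono fun x ↦ ENNReal.ofReal_le_ofReal (gaussianPDFReal_le_inv_sqrt m v x)

lemma gaussianReal_Icc_le_of_one_le (m : ℝ) {v : ℝ≥0} (hv : 1 ≤ 2 * π * v) (a b : ℝ) :
    gaussianReal m v (Set.Icc a b) ≤ ENNReal.ofReal (b - a) := by
  have hv0 : v ≠ 0 := by rintro rfl; norm_num at hv
  have hdensity : (√(2 * π * v))⁻¹ ≤ 1 := inv_le_one_of_one_le₀ (one_le_sqrt.2 hv)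
  calc gaussianReal m v (Set.Icc a b)
      ≤ ENNReal.ofReal (√(2 * π * v))⁻¹ * volume (Set.Icc a b) :=
        gaussianReal_le_mul_volume m hv0 _
    _ ≤ 1 * ENNReal.ofReal (b - a) := by
        rw [Real.volume_Icc]
        gcongr
        exact ENNReal.ofReal_le_one.2 hdensity
    _ = ENNReal.ofReal (b - a) := one_mul _

lemma measure_sum_sq_le_sq_le_prod {ι Ω : Type*} [Fintype ι] [MeasurableSpace Ω]
    {μ : Measure Ω} {y : ι → Ω → ℝ} (hy : iIndepFun y μ) {ε : ℝ} (hε : 0 ≤ ε) :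
    μ {ω | ∑ i, y i ω ^ 2 ≤ ε ^ 2} ≤ ∏ i, μ (y i ⁻¹' Set.Icc (-ε) ε) := by
  have hsub : {ω | ∑ i, y i ω ^ 2 ≤ ε ^ 2} ⊆ ⋂ i, y i ⁻¹' Set.Icc (-ε) ε := by
    intro ω hω
    refine Set.mem_iInter.2 fun i ↦ abs_le_of_sq_le_sq' ?_ hε
    exact (Finset.single_le_sum (fun j _ ↦ sq_nonneg (y j ω)) (Finset.mem_univ i)).trans hω
  calc μ {ω | ∑ i, y i ω ^ 2 ≤ ε ^ 2} ≤ μ (⋂ i, y i ⁻¹' Set.Icc (-ε) ε) := measure_mono hsub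
    _ = ∏ i, μ (y i ⁻¹' Set.Icc (-ε) ε) :=
        hy.meas_iInter fun _ ↦ ⟨Set.Icc (-ε) ε, measurableSet_Icc, rfl⟩

theorem gaussian_shrinkage_bound_general {Ω : Type*} [MeasurableSpace Ω] (μ : Measure Ω)
    (k : ℕ) (ε : ℝ) (hε0 : 0 < ε)
    (v : Fin k → ℝ≥0) (hv : ∀ i, (1 / 2 : ℝ≥0) ≤ v i)
    (y : Fin k → Ω → ℝ) (hymeas : ∀ i, Measurable (y i))
    (hylaw : ∀ i, μ.map (y i) = gaussianReal 0 (v i))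
    (hyindep : iIndepFun y μ) :
    μ {ω | ∑ i, y i ω ^ 2 ≤ ε ^ 2} ≤ ENNReal.ofReal ((3 * ε) ^ k) := by
  have hvar : ∀ i, 1 ≤ 2 * π * v i := fun i ↦ by
    have : (1 / 2 : ℝ) ≤ v i := by exact_mod_cast hv i
    nlinarith [pi_gt_three]
  calc μ {ω | ∑ i, y i ω ^ 2 ≤ ε ^ 2} ≤ ∏ i, μ (y i ⁻¹' Set.Icc (-ε) ε) :=
        measure_sum_sq_le_sq_le_prod hyindep hε0.le
    _ ≤ ∏ _i : Fin k, ENNReal.ofReal (3 * ε) := Finset.prod_le_prod' fun i _ ↦ by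
        rw [← Measure.map_apply (hymeas i) measurableSet_Icc, hylaw i]
        exact (gaussianReal_Icc_le_of_one_le 0 (hvar i) _ _).trans
          (ENNReal.ofReal_le_ofReal (by linarith))
    _ = ENNReal.ofReal ((3 * ε) ^ k) := by
        rw [Finset.prod_const, Finset.card_univ, Fintype.card_fin,
          ENNReal.ofReal_pow (by positivity)]

/-- Let `ε ∈ (0,1)` and let `y₁,…,y_k` be independent centered Gaussians with
variances `σᵢ² ≥ 1/2`.  Then `Pr[∑ yᵢ² ≤ ε²] ≤ (3ε)^k`. -/
theorem gaussian_shrinkage_bound {Ω : Type*} [MeasurableSpace Ω] (μ : Measure Ω)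
    [IsProbabilityMeasure μ] (k : ℕ) (hk : 0 < k) (ε : ℝ) (hε0 : 0 < ε) (hε1 : ε < 1)
    (v : Fin k → ℝ≥0) (hv : ∀ i, (1 / 2 : ℝ≥0) ≤ v i)
    (y : Fin k → Ω → ℝ) (hymeas : ∀ i, Measurable (y i))
    (hylaw : ∀ i, μ.map (y i) = gaussianReal 0 (v i))
    (hyindep : iIndepFun y μ) :
    μ {ω | ∑ i, y i ω ^ 2 ≤ ε ^ 2} ≤ ENNReal.ofReal ((3 * ε) ^ k) :=
  gaussian_shrinkage_bound_general μ k ε hε0 v hv y hymeas hylaw hyindep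
end

section
/- There exists a universal constant C > 0 such that for every ε ∈ (0,1) and every natural number i ≥ 0, the quantity R(i,ε) = (1 + (1+√i)·ε/4 + ε) / (1 + (2+i)·ε − ε/4) satisfies: R(i,ε) ≤ 1 − ε/8 whenever i ≤ 1/ε², and R(i,ε) ≤ C/√i whenever i > 1/ε². -/
/-- There is a universal constant `C > 0` such that for every `ε ∈ (0,1)` and
every natural number `i ≥ 0`, the quantity
`R(i,ε) = (1 + (1+√i)·ε/4 + ε) / (1 + (2+i)·ε − ε/4)` satisfies
`R(i,ε) ≤ 1 − ε/8` whenever `i ≤ 1/ε²`, and `R(i,ε) ≤ C/√i` whenever `i > 1/ε²`. -/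
theorem ratio_two_case_bound :
    ∃ C : ℝ, 0 < C ∧ ∀ ε : ℝ, 0 < ε → ε < 1 → ∀ i : ℕ,
      (((i : ℝ) ≤ 1 / ε ^ 2 →
        (1 + (1 + Real.sqrt i) * ε / 4 + ε) / (1 + (2 + (i : ℝ)) * ε - ε / 4) ≤ 1 - ε / 8) ∧
       (1 / ε ^ 2 < (i : ℝ) →
        (1 + (1 + Real.sqrt i) * ε / 4 + ε) / (1 + (2 + (i : ℝ)) * ε - ε / 4) ≤
          C / Real.sqrt i)) := by
  refine ⟨3, by norm_num, fun ε hε hε1 i => ?_⟩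
  set s := Real.sqrt i with hs
  have hs0 : 0 ≤ s := Real.sqrt_nonneg _
  have hsq : s ^ 2 = (i : ℝ) := Real.sq_sqrt (Nat.cast_nonneg i)
  have hD : 0 < 1 + (2 + (i : ℝ)) * ε - ε / 4 := by
    have : (0:ℝ) ≤ (i:ℝ) := Nat.cast_nonneg i
    nlinarith
  have hi : (i : ℝ) = s ^ 2 := hsq.symm
  rw [hi] at hD ⊢
  constructor
  · intro _
    rw [div_le_iff₀ hD]
    nlinarith [mul_nonneg hε.le (sq_nonneg (s - 1/7)),
      mul_nonneg (mul_nonneg hε.le (sq_nonneg s)) (by linarith : (0:ℝ) ≤ 1 - ε),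
      mul_nonneg hε.le (by linarith : (0:ℝ) ≤ 1 - ε)]
  · intro hgt
    have hi1 : (1:ℝ) < s ^ 2 * ε ^ 2 := by
      rw [div_lt_iff₀ (by positivity)] at hgt
      linarith
    have hse : 1 < s * ε := by
      nlinarith [mul_nonneg hs0 hε.le]
    have hs1 : 0 < s := by nlinarith
    rw [div_le_div_iff₀ hD hs1]
    nlinarith [mul_le_mul_of_nonneg_left hse.le hs0,
      mul_nonneg (mul_nonneg (sq_nonneg s) hε.le) (by linarith : (0:ℝ) ≤ 1 - ε),
      mul_pos (mul_pos hs1 hs1) hε]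
end
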